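/- For a set X and A ⊆ X, let I_A = {α ∈ 𝟛^X : α(y) = U for all y ∈ A}, and let Ann(S) = {α ∈ 𝟛^X : (α ∧ β) ∨ (¬α ∧ β) = U for all β ∈ S}. Then Ann(I_A) = I_{Aᶜ}, and I_A ∩ I_B = I_{A∪B}. -/
import Mathlib


/-- The three truth values of McCarthy's three-valued logic. -/
inductive Three : Type
  | T | F | U
deriving DecidableEq

open Three

/-- Negation in `𝟛`. -/
def tneg : Three → Three
  | T => F
  | F => T
  | U => U

/-- McCarthy's left-sequential conjunction. -/
def tand : Three → Three → Three
  | T, x => x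
  | F, _ => F
  | U, _ => U

/-- McCarthy's left-sequential disjunction. -/
def tor : Three → Three → Three
  | T, _ => T
  | F, x => x
  | U, _ => U

/-- Pointwise disjunction on `𝟛^X`. -/
def fOr {X : Type*} (α β : X → Three) : X → Three := fun x => tor (α x) (β x)

/-- Pointwise conjunction on `𝟛^X`. -/
def fAnd {X : Type*} (α β : X → Three) : X → Three := fun x => tand (α x) (β x)

/-- Pointwise negation on `𝟛^X`. -/
def fNeg {X : Type*} (α : X → Three) : X → Three := fun x => tneg (α x)

/-- The constant function `F`, the bottom element of `𝟛^X`. -/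
def bF {X : Type*} : X → Three := fun _ => F

/-- The order on `𝟛^X`: `α ≤ β` iff `α ∨ β = β`. -/
def fLe {X : Type*} (α β : X → Three) : Prop := fOr α β = β

/-- `α` is an atom of `𝟛^X`: `α ≠ F` and any `b` with `F ≤ b ≤ α`, `b ≠ α` is `F`. -/
def IsAtom3 {X : Type*} (α : X → Three) : Prop :=
  α ≠ bF ∧ ∀ β : X → Three, fLe bF β → fLe β α → β ≠ α → β = bF

/-- The annihilator of a subset of `𝟛^X` under the if-then-else action. -/
def Ann3 {X : Type*} (S : Set (X → Three)) : Set (X → Three) :=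
  {α | ∀ β ∈ S, fOr (fAnd α β) (fAnd (fNeg α) β) = fun _ => Three.U}

/-- `I_A = {α ∈ 𝟛^X : α(y) = U for all y ∈ A}`. -/
def IA {X : Type*} (A : Set X) : Set (X → Three) :=
  {α | ∀ y ∈ A, α y = Three.U}


lemma gval (a b : Three) :
    tor (tand a b) (tand (tneg a) b) = if a = U then U else b := by
  cases a <;> cases b <;> rfl

/-- `Ann(I_A) = I_{Aᶜ}` and `I_A ∩ I_B = I_{A ∪ B}`. -/
theorem stmt18 {X : Type*} (A B : Set X) :
    Ann3 (IA A) = IA Aᶜ ∧ IA A ∩ IA B = IA (A ∪ B) := by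
  classical
  constructor
  · ext α
    constructor
    · intro h y hy
      have hβ : (fun x => if x ∈ A then U else T) ∈ IA A := by
        intro z hz; simp [hz]
      have := congrFun (h _ hβ) y
      simp only [fOr, fAnd, fNeg, gval] at this
      simp only [Set.mem_compl_iff] at hy
      simp [hy] at this
      by_contra hne
      simp [hne] at this
    · intro h β hβ
      funext x
      simp only [fOr, fAnd, fNeg, gval]
      by_cases hx : x ∈ A
      · rw [hβ x hx]; split <;> rfl
      · rw [h x hx]; rfl
  · ext α
    constructor
    · rintro ⟨h1, h2⟩ y (hy | hy)
      exacts [h1 y hy, h2 y hy]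
    · intro h
      exact ⟨fun y hy => h y (Or.inl hy), fun y hy => h y (Or.inr hy)⟩
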